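/- For k ≥ 2, the integral ∫₀^∞ J(r)⁴ r dr with J(r) = 2k·r^k/(1+r^{2k}) satisfies the identity ∫₀^∞ J⁴ r dr = (2k²-2)·∫₀^∞ J² r dr - 2·∫₀^∞ J⁴ r dr, i.e. 3∫₀^∞ J⁴ r dr = (2k²-2)∫₀^∞ J² r dr. -/

import Mathlib

/-!
With `I = 2 arctan (r ^ k)` one has `r I' = J = k sin I`. Using this and `sin² + cos² = 1`,
the flux `F = r² J² (1 - k cos I)` satisfies `F' = 3 J⁴ r - (2k² - 2) J² r`. Since `F(0) = 0`
and `r² J² = O(r^(2 - 2k)) → 0` at infinity when `k ≥ 2`, integrating `F'` over `(0, ∞)`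
gives `0`, which is the identity.
-/

open Real Set MeasureTheory Filter Topology Asymptotics

theorem sin_two_mul_arctan (x : ℝ) : sin (2 * arctan x) = 2 * x / (1 + x ^ 2) := by
  have h : √(1 + x ^ 2) ^ 2 = 1 + x ^ 2 := sq_sqrt (by positivity)
  rw [sin_two_mul, sin_arctan, cos_arctan]
  field_simp
  rw [h]

noncomputable section

def harmonicAngle (k : ℕ) (r : ℝ) : ℝ := 2 * arctan (r ^ k)

def harmonicJ (k : ℕ) (r : ℝ) : ℝ := k * sin (harmonicAngle k r)

def harmonicFlux (k : ℕ) (r : ℝ) : ℝ :=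
  harmonicJ k r ^ 2 * r ^ 2 * (1 - k * cos (harmonicAngle k r))

end

section

variable {k : ℕ} {r : ℝ}

theorem harmonicJ_eq (k : ℕ) (r : ℝ) :
    harmonicJ k r = 2 * k * r ^ k / (1 + r ^ (2 * k)) := by
  rw [harmonicJ, harmonicAngle, sin_two_mul_arctan, ← pow_mul, mul_comm k 2]
  ring

@[fun_prop]
theorem continuous_harmonicAngle (k : ℕ) : Continuous (harmonicAngle k) := by
  unfold harmonicAngle; fun_prop

@[fun_prop]
theorem continuous_harmonicJ (k : ℕ) : Continuous (harmonicJ k) := by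
  unfold harmonicJ; fun_prop

theorem continuous_harmonicFlux (k : ℕ) : Continuous (harmonicFlux k) := by
  unfold harmonicFlux; fun_prop

theorem harmonicJ_sq_mul_pow_two_mul_le (k : ℕ) (r : ℝ) :
    harmonicJ k r ^ 2 * r ^ (2 * k) ≤ 4 * k ^ 2 := by
  have hx : 0 ≤ r ^ (2 * k) := by rw [pow_mul]; positivity
  rw [harmonicJ_eq, div_pow, div_mul_eq_mul_div, div_le_iff₀ (by positivity)]
  have : (r ^ k) ^ 2 = r ^ (2 * k) := by rw [← pow_mul, mul_comm]
  rw [mul_pow, this]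
  nlinarith [mul_nonneg hx hx]

theorem harmonicJ_sq_mul_pow_le_rpow (k n : ℕ) (hr : 0 < r) :
    harmonicJ k r ^ 2 * r ^ n ≤ 4 * k ^ 2 * r ^ ((n : ℝ) - 2 * k) := by
  have hpow : r ^ ((n : ℝ) - 2 * k) = r ^ n / r ^ (2 * k) := by
    rw [rpow_sub hr, rpow_natCast, ← rpow_natCast r (2 * k)]
    push_cast
    rfl
  rw [hpow, mul_div_assoc', le_div_iff₀ (by positivity)]
  calc harmonicJ k r ^ 2 * r ^ n * r ^ (2 * k)
      = harmonicJ k r ^ 2 * r ^ (2 * k) * r ^ n := by ring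
    _ ≤ 4 * k ^ 2 * r ^ n :=
      mul_le_mul_of_nonneg_right (harmonicJ_sq_mul_pow_two_mul_le k r) (by positivity)

theorem hasDerivAt_harmonicAngle (k : ℕ) (hr : r ≠ 0) :
    HasDerivAt (harmonicAngle k) (harmonicJ k r / r) r := by
  have h := ((hasDerivAt_pow k r).arctan).const_mul 2
  refine h.congr_deriv ?_
  rw [harmonicJ_eq]
  rcases k with _ | m
  · simp
  · have hden : (0 : ℝ) < 1 + r ^ (2 * (m + 1)) := by rw [pow_mul]; positivity
    simp only [Nat.add_sub_cancel, ← pow_mul, mul_comm (m + 1) 2]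
    field_simp
    ring

theorem hasDerivAt_harmonicFlux (k : ℕ) (hr : r ≠ 0) :
    HasDerivAt (harmonicFlux k)
      (3 * (harmonicJ k r ^ 4 * r) - (2 * k ^ 2 - 2) * (harmonicJ k r ^ 2 * r)) r := by
  have hI := hasDerivAt_harmonicAngle k hr
  have hJ : HasDerivAt (harmonicJ k) (k * (cos (harmonicAngle k r) * (harmonicJ k r / r))) r :=
    hI.sin.const_mul (k : ℝ)
  have h := ((hJ.fun_pow 2).fun_mul (hasDerivAt_pow 2 r)).fun_mul
    ((hI.cos.const_mul (k : ℝ)).const_sub 1)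
  refine h.congr_deriv ?_
  simp only [harmonicJ]
  field_simp
  linear_combination
    (-2 * k ^ 4 * sin (harmonicAngle k r) ^ 2 * r) * sin_sq_add_cos_sq (harmonicAngle k r)

theorem harmonicJ_sq_le (k : ℕ) (r : ℝ) : harmonicJ k r ^ 2 ≤ k ^ 2 := by
  rw [harmonicJ, mul_pow]
  exact mul_le_of_le_one_right (by positivity) (sin_sq_le_one _)

theorem integrableOn_harmonicJ_sq_mul (hk : 2 ≤ k) :
    IntegrableOn (fun r => harmonicJ k r ^ 2 * r) (Ioi 0) := by
  have hcont : Continuous (fun r => harmonicJ k r ^ 2 * r) := by fun_prop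
  have hO :
      (fun r => harmonicJ k r ^ 2 * r) =O[atTop] (fun r : ℝ => r ^ ((1 : ℝ) - 2 * k)) := by
    refine IsBigO.of_bound (4 * k ^ 2) ?_
    filter_upwards [eventually_gt_atTop 0] with r hr
    rw [norm_of_nonneg (by positivity), norm_of_nonneg (by positivity)]
    simpa using harmonicJ_sq_mul_pow_le_rpow k 1 hr
  have hint : IntegrableAtFilter (fun r : ℝ => r ^ ((1 : ℝ) - 2 * k)) atTop := by
    have : (2 : ℝ) ≤ k := by exact_mod_cast hk
    exact integrableAtFilter_rpow_atTop_iff.mpr (by linarith)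
  exact (hcont.locallyIntegrable.locallyIntegrableOn _).integrableOn_of_isBigO_atTop hO hint
    |>.mono_set Ioi_subset_Ici_self

theorem integrableOn_harmonicJ_pow_four_mul (hk : 2 ≤ k) :
    IntegrableOn (fun r => harmonicJ k r ^ 4 * r) (Ioi 0) := by
  have h := (integrableOn_harmonicJ_sq_mul hk).bdd_mul (f := fun r => harmonicJ k r ^ 2)
    (c := k ^ 2) (by fun_prop)
    (ae_of_all _ fun r => by
      rw [norm_of_nonneg (by positivity)]; exact harmonicJ_sq_le k r)
  refine h.congr (ae_of_all _ fun r => ?_)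
  ring

theorem tendsto_harmonicFlux_atTop (hk : 2 ≤ k) :
    Tendsto (harmonicFlux k) atTop (𝓝 0) := by
  have hexp : 0 < 2 * (k : ℝ) - 2 := by
    have : (2 : ℝ) ≤ k := by exact_mod_cast hk
    linarith
  have hJ : Tendsto (fun r => harmonicJ k r ^ 2 * r ^ 2) atTop (𝓝 0) := by
    have hlim := (tendsto_rpow_neg_atTop hexp).const_mul (4 * (k : ℝ) ^ 2)
    rw [mul_zero] at hlim
    refine squeeze_zero' (Eventually.of_forall fun r => by positivity) ?_ hlim
    filter_upwards [eventually_gt_atTop 0] with r hr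
    convert harmonicJ_sq_mul_pow_le_rpow k 2 hr using 3
    push_cast
    ring
  refine hJ.zero_mul_isBoundedUnder_le
    ⟨1 + k, eventually_map.mpr (Eventually.of_forall fun r => ?_)⟩
  calc ‖1 - k * cos (harmonicAngle k r)‖ ≤ ‖(1 : ℝ)‖ + ‖k * cos (harmonicAngle k r)‖ :=
        norm_sub_le _ _
    _ ≤ 1 + k := by
      rw [norm_one, norm_mul, Real.norm_natCast]
      gcongr
      exact mul_le_of_le_one_right (by positivity) (abs_cos_le_one _)

theorem harmonicFlux_zero (k : ℕ) : harmonicFlux k 0 = 0 := by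
  simp [harmonicFlux]

theorem three_mul_integral_harmonicJ_pow_four_mul (hk : 2 ≤ k) :
    3 * (∫ r in Ioi 0, harmonicJ k r ^ 4 * r)
      = (2 * k ^ 2 - 2) * (∫ r in Ioi 0, harmonicJ k r ^ 2 * r) := by
  have hJ4 := (integrableOn_harmonicJ_pow_four_mul hk).const_mul 3
  have hJ2 := (integrableOn_harmonicJ_sq_mul hk).const_mul (2 * (k : ℝ) ^ 2 - 2)
  have h := integral_Ioi_of_hasDerivAt_of_tendsto
    (continuous_harmonicFlux k).continuousWithinAt
    (fun r hr => hasDerivAt_harmonicFlux k (ne_of_gt hr)) (hJ4.sub hJ2)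
    (tendsto_harmonicFlux_atTop hk)
  rw [harmonicFlux_zero, sub_zero, integral_sub hJ4 hJ2, integral_const_mul,
    integral_const_mul] at h
  linarith

end

/-- For `k ≥ 2`, with `J(r) = 2k r^k/(1+r^(2k))`:
`∫ J⁴ r dr = (2k²-2) ∫ J² r dr - 2 ∫ J⁴ r dr`, i.e. `3 ∫ J⁴ r dr = (2k²-2) ∫ J² r dr`. -/
theorem J4_integral_identity (k : ℕ) (hk : 2 ≤ k)
    (J : ℝ → ℝ) (hJ : ∀ r : ℝ, J r = 2 * k * r ^ k / (1 + r ^ (2 * k))) :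
    (∫ r in Set.Ioi (0:ℝ), (J r) ^ 4 * r)
      = (2 * (k : ℝ) ^ 2 - 2) * (∫ r in Set.Ioi (0:ℝ), (J r) ^ 2 * r)
        - 2 * (∫ r in Set.Ioi (0:ℝ), (J r) ^ 4 * r) ∧
    3 * (∫ r in Set.Ioi (0:ℝ), (J r) ^ 4 * r)
      = (2 * (k : ℝ) ^ 2 - 2) * (∫ r in Set.Ioi (0:ℝ), (J r) ^ 2 * r) := by
  obtain rfl : J = harmonicJ k := funext fun r => (hJ r).trans (harmonicJ_eq k r).symm
  have h := three_mul_integral_harmonicJ_pow_four_mul hk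
  exact ⟨by linarith, h⟩
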